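/- arXiv:1304.4499 — 10 statements merged into one kernel-verified Lean document; each statement's English description precedes it below -/
import Mathlib

section
/- Let φ : ℤ → ℤ → Prop be an arbitrary guard and t : ℤ → ℤ → ℤ an arbitrary update term. Define the transition relation R on states (c, a) ∈ ℤ × (ℤ → ℤ) by: R (c, a) (c', a') holds iff φ c (a c) holds, c' = c + 1, and a' = Function.update a c (t c (a c)). Then the acceleration (transitive closure) of R is expressible in one shot: for all (c, a) and (c', a'), Relation.TransGen R (c, a) (c', a') holds if and only if there exists n : ℕ with n > 0 such that (∀ j : ℤ, c ≤ j → j < c + n → φ j (a j)), c' = c + n, and a' = (fun j => if c ≤ j ∧ j < c + n then t j (a j) else a j). -/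
/-! After `n` steps from `(c, a)` the counter is `c + n` and the array has been rewritten
exactly on `[c, c + n)`. Because the guard and the update at position `j` only read `a j`, and
that cell is untouched before the counter reaches `j`, every step reads the original array:
the `n + 1`-st step fires iff `φ (c + n) (a (c + n))`, and it extends the rewritten window by
the cell `c + n`. So the reachable states are exactly the accelerated ones, by induction on `n`. -/

namespace LocalGroundAssignment

open Relation

variable {α : Type*} (φ : ℤ → α → Prop) (t : ℤ → α → α)

def step (p q : ℤ × (ℤ → α)) : Prop :=
  φ p.1 (p.2 p.1) ∧ q.1 = p.1 + 1 ∧ q.2 = Function.update p.2 p.1 (t p.1 (p.2 p.1))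

def accelArray (c : ℤ) (a : ℤ → α) (n : ℕ) : ℤ → α :=
  fun j => if c ≤ j ∧ j < c + n then t j (a j) else a j

def GuardedOn (c : ℤ) (a : ℤ → α) (n : ℕ) : Prop :=
  ∀ j : ℤ, c ≤ j → j < c + n → φ j (a j)

variable {φ t} {c : ℤ} {a : ℤ → α}

@[simp]
theorem accelArray_zero : accelArray t c a 0 = a := by
  ext j
  simp only [accelArray, Nat.cast_zero, add_zero]
  exact if_neg fun h => h.1.not_gt h.2

theorem accelArray_of_le {n : ℕ} {j : ℤ} (h : c + n ≤ j) : accelArray t c a n j = a j :=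
  if_neg fun hj => hj.2.not_ge h

theorem accelArray_succ (n : ℕ) :
    accelArray t c a (n + 1) =
      Function.update (accelArray t c a n) (c + n) (t (c + n) (a (c + n))) := by
  ext j
  rcases eq_or_ne j (c + n) with rfl | hj
  · simp [accelArray]
  · have hwindow : (c ≤ j ∧ j < c + (n + 1 : ℕ)) ↔ (c ≤ j ∧ j < c + n) := by
      push_cast; omega
    simp only [accelArray, Function.update_of_ne hj, hwindow]

theorem guardedOn_zero : GuardedOn φ c a 0 :=
  fun _ h₁ h₂ => absurd h₂ (by simpa using h₁)

theorem guardedOn_succ {n : ℕ} :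
    GuardedOn φ c a (n + 1) ↔ GuardedOn φ c a n ∧ φ (c + n) (a (c + n)) := by
  refine ⟨fun h => ⟨fun j h₁ h₂ => h j h₁ (by push_cast; omega),
    h _ (by omega) (by push_cast; omega)⟩, fun ⟨h, hn⟩ j h₁ h₂ => ?_⟩
  rcases lt_or_eq_of_le (show j ≤ c + n by push_cast at h₂; omega) with hj | rfl
  · exact h j h₁ hj
  · exact hn

theorem step_accel_iff {n : ℕ} {q : ℤ × (ℤ → α)} :
    step φ t (c + n, accelArray t c a n) q ↔
      φ (c + n) (a (c + n)) ∧ q = (c + (n + 1 : ℕ), accelArray t c a (n + 1)) := by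
  obtain ⟨c', a'⟩ := q
  simp only [step, accelArray_of_le le_rfl, accelArray_succ, Prod.mk.injEq, Nat.cast_succ,
    add_assoc]

theorem reflTransGen_step_iff {q : ℤ × (ℤ → α)} :
    ReflTransGen (step φ t) (c, a) q ↔
      ∃ n : ℕ, GuardedOn φ c a n ∧ q = (c + n, accelArray t c a n) := by
  constructor
  · intro h
    induction h with
    | refl => exact ⟨0, guardedOn_zero, by simp⟩
    | tail _ hstep ih =>
      obtain ⟨n, hg, rfl⟩ := ih
      obtain ⟨hn, rfl⟩ := step_accel_iff.mp hstep
      exact ⟨n + 1, guardedOn_succ.mpr ⟨hg, hn⟩, rfl⟩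
  · rintro ⟨n, hg, rfl⟩
    induction n with
    | zero => simpa using ReflTransGen.refl
    | succ n ih =>
      obtain ⟨hg, hn⟩ := guardedOn_succ.mp hg
      exact (ih hg).tail (step_accel_iff.mpr ⟨hn, rfl⟩)

theorem transGen_step_iff {q : ℤ × (ℤ → α)} :
    TransGen (step φ t) (c, a) q ↔
      ∃ n : ℕ, 0 < n ∧ GuardedOn φ c a n ∧ q = (c + n, accelArray t c a n) := by
  rw [TransGen.tail'_iff]
  constructor
  · rintro ⟨_, hreach, hstep⟩
    obtain ⟨n, hg, rfl⟩ := reflTransGen_step_iff.mp hreach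
    obtain ⟨hn, rfl⟩ := step_accel_iff.mp hstep
    exact ⟨n + 1, n.succ_pos, guardedOn_succ.mpr ⟨hg, hn⟩, rfl⟩
  · rintro ⟨_ | n, hpos, hg, rfl⟩
    · exact absurd hpos (lt_irrefl 0)
    obtain ⟨hg, hn⟩ := guardedOn_succ.mp hg
    exact ⟨_, reflTransGen_step_iff.mpr ⟨n, hg, rfl⟩, step_accel_iff.mpr ⟨hn, rfl⟩⟩

end LocalGroundAssignment

open LocalGroundAssignment in
theorem simple_local_ground_assignment_acceleration
    (φ : ℤ → ℤ → Prop) (t : ℤ → ℤ → ℤ)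
    (c : ℤ) (a : ℤ → ℤ) (c' : ℤ) (a' : ℤ → ℤ) :
    Relation.TransGen
      (fun p q : ℤ × (ℤ → ℤ) =>
        φ p.1 (p.2 p.1) ∧ q.1 = p.1 + 1 ∧
          q.2 = Function.update p.2 p.1 (t p.1 (p.2 p.1)))
      (c, a) (c', a') ↔
    ∃ n : ℕ, n > 0 ∧
      (∀ j : ℤ, c ≤ j → j < c + n → φ j (a j)) ∧
      c' = c + n ∧
      a' = fun j => if c ≤ j ∧ j < c + n then t j (a j) else a j := by
  exact transGen_step_iff.trans <| exists_congr fun n => by simp only [Prod.mk.injEq]; rfl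
end

section
/- Let u : ℤ → ℤ (an iterator), κ : ℤ → ℤ (a selector), t : ℤ → ℤ → ℤ (an update term), and φ : ℤ → ℤ → Prop (a guard). Fix c₀ : ℤ and assume the map (k : ℕ) ↦ κ (u^[k] c₀) is injective (the semantic content of κ being a selector for the iterator u). Define the relation R on ℤ × (ℤ → ℤ) by: R (c, a) (c', a') iff φ c (a (κ c)), c' = u c, and a' = Function.update a (κ c) (t c (a (κ c))). Then for every a : ℤ → ℤ and every (c', a'), Relation.TransGen R (c₀, a) (c', a') holds if and only if there exists n : ℕ with n > 0 such that: (∀ k < n, φ (u^[k] c₀) (a (κ (u^[k] c₀)))), c' = u^[n] c₀, (∀ k < n, a' (κ (u^[k] c₀)) = t (u^[k] c₀) (a (κ (u^[k] c₀)))), and (∀ j : ℤ, (∀ k < n, j ≠ κ (u^[k] c₀)) → a' j = a j). -/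
private def accelRun (u κ : ℤ → ℤ) (t : ℤ → ℤ → ℤ) (a : ℤ → ℤ) (c₀ : ℤ) :
    ℕ → ℤ × (ℤ → ℤ)
  | 0 => (c₀, a)
  | n + 1 =>
    let p := accelRun u κ t a c₀ n
    (u p.1, Function.update p.2 (κ p.1) (t p.1 (p.2 (κ p.1))))

private theorem accelRun_fst (u κ : ℤ → ℤ) (t : ℤ → ℤ → ℤ) (a : ℤ → ℤ) (c₀ : ℤ) :
    ∀ n, (accelRun u κ t a c₀ n).1 = u^[n] c₀
  | 0 => rfl
  | n + 1 => by
    simp only [accelRun, accelRun_fst u κ t a c₀ n, Function.iterate_succ_apply']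

private theorem accelRun_off (u κ : ℤ → ℤ) (t : ℤ → ℤ → ℤ) (a : ℤ → ℤ) (c₀ : ℤ) :
    ∀ n, ∀ j : ℤ, (∀ k < n, j ≠ κ (u^[k] c₀)) → (accelRun u κ t a c₀ n).2 j = a j
  | 0, _, _ => rfl
  | n + 1, j, hj => by
    have h1 : j ≠ κ (u^[n] c₀) := hj n (Nat.lt_succ_self n)
    simp only [accelRun, accelRun_fst u κ t a c₀ n]
    rw [Function.update_of_ne h1]
    exact accelRun_off u κ t a c₀ n j (fun k hk => hj k (Nat.lt_succ_of_lt hk))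

private theorem accelRun_write (u κ : ℤ → ℤ) (t : ℤ → ℤ → ℤ) (a : ℤ → ℤ) (c₀ : ℤ)
    (hinj : Function.Injective fun k : ℕ => κ (u^[k] c₀)) :
    ∀ n, ∀ k < n, (accelRun u κ t a c₀ n).2 (κ (u^[k] c₀)) =
      t (u^[k] c₀) (a (κ (u^[k] c₀)))
  | n + 1, k, hk => by
    simp only [accelRun, accelRun_fst u κ t a c₀ n]
    rcases Nat.lt_succ_iff_lt_or_eq.mp hk with hk' | rfl
    · have hne : κ (u^[k] c₀) ≠ κ (u^[n] c₀) := fun h => (Nat.ne_of_lt hk') (hinj h)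
      rw [Function.update_of_ne hne]
      exact accelRun_write u κ t a c₀ hinj n k hk'
    · rw [Function.update_self]
      have : (accelRun u κ t a c₀ k).2 (κ (u^[k] c₀)) = a (κ (u^[k] c₀)) :=
        accelRun_off u κ t a c₀ k _ (fun m hm h => (Nat.ne_of_lt hm).symm (hinj h))
      rw [this]

theorem local_ground_assignment_acceleration
    (u κ : ℤ → ℤ) (t : ℤ → ℤ → ℤ) (φ : ℤ → ℤ → Prop) (c₀ : ℤ)
    (hinj : Function.Injective fun k : ℕ => κ (u^[k] c₀))
    (a : ℤ → ℤ) (c' : ℤ) (a' : ℤ → ℤ) :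
    Relation.TransGen
      (fun p q : ℤ × (ℤ → ℤ) =>
        φ p.1 (p.2 (κ p.1)) ∧ q.1 = u p.1 ∧
          q.2 = Function.update p.2 (κ p.1) (t p.1 (p.2 (κ p.1))))
      (c₀, a) (c', a') ↔
    ∃ n : ℕ, n > 0 ∧
      (∀ k < n, φ (u^[k] c₀) (a (κ (u^[k] c₀)))) ∧
      c' = u^[n] c₀ ∧
      (∀ k < n, a' (κ (u^[k] c₀)) = t (u^[k] c₀) (a (κ (u^[k] c₀)))) ∧
      (∀ j : ℤ, (∀ k < n, j ≠ κ (u^[k] c₀)) → a' j = a j) := by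
  set R := fun p q : ℤ × (ℤ → ℤ) =>
        φ p.1 (p.2 (κ p.1)) ∧ q.1 = u p.1 ∧
          q.2 = Function.update p.2 (κ p.1) (t p.1 (p.2 (κ p.1))) with hR
  constructor
  · intro h
    suffices H : ∀ q : ℤ × (ℤ → ℤ), Relation.TransGen R (c₀, a) q →
        ∃ n : ℕ, n > 0 ∧
          (∀ k < n, φ (u^[k] c₀) (a (κ (u^[k] c₀)))) ∧
          q.1 = u^[n] c₀ ∧
          (∀ k < n, q.2 (κ (u^[k] c₀)) = t (u^[k] c₀) (a (κ (u^[k] c₀)))) ∧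
          (∀ j : ℤ, (∀ k < n, j ≠ κ (u^[k] c₀)) → q.2 j = a j) from H (c', a') h
    intro q h
    induction h with
    | single h =>
      obtain ⟨hφ, hc, ha⟩ := h
      refine ⟨1, Nat.one_pos, ?_, by simpa using hc, ?_, ?_⟩
      · intro k hk; interval_cases k; simpa using hφ
      · intro k hk; interval_cases k
        simp only [Function.iterate_zero, id_eq]
        rw [ha, Function.update_self]
      · intro j hj
        rw [ha, Function.update_of_ne (by simpa using hj 0 Nat.one_pos)]
    | tail _ step ih =>
      rename_i b bfin hprev
      obtain ⟨n, hn, hφs, hc, hw, ho⟩ := ih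
      obtain ⟨hφ, hc', ha'⟩ := step
      have hb2 : b.2 (κ (u^[n] c₀)) = a (κ (u^[n] c₀)) :=
        ho _ (fun k hk h => (Nat.ne_of_lt hk).symm (hinj h))
      refine ⟨n + 1, Nat.succ_pos n, ?_, ?_, ?_, ?_⟩
      · intro k hk
        rcases Nat.lt_succ_iff_lt_or_eq.mp hk with hk' | rfl
        · exact hφs k hk'
        · rw [← hb2, ← hc]; exact hφ
      · rw [hc', hc, Function.iterate_succ_apply']
      · intro k hk
        rcases Nat.lt_succ_iff_lt_or_eq.mp hk with hk' | rfl
        · have hne : κ (u^[k] c₀) ≠ κ b.1 := by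
            rw [hc]; exact fun h => (Nat.ne_of_lt hk') (hinj h)
          rw [ha', Function.update_of_ne hne]
          exact hw k hk'
        · rw [ha', hc, hb2]
          exact Function.update_self _ _ _
      · intro j hj
        have hne : j ≠ κ b.1 := by rw [hc]; exact hj n (Nat.lt_succ_self n)
        rw [ha', Function.update_of_ne hne]
        exact ho j (fun k hk => hj k (Nat.lt_succ_of_lt hk))
  · rintro ⟨n, hn, hφs, hc, hw, ho⟩
    have heq : (c', a') = accelRun u κ t a c₀ n := by
      refine Prod.ext ?_ ?_
      · simpa using hc.trans (accelRun_fst u κ t a c₀ n).symm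
      · funext j
        by_cases hj : ∀ k < n, j ≠ κ (u^[k] c₀)
        · simpa using (ho j hj).trans (accelRun_off u κ t a c₀ n j hj).symm
        · push_neg at hj
          obtain ⟨k, hk, rfl⟩ := hj
          simpa using (hw k hk).trans (accelRun_write u κ t a c₀ hinj n k hk).symm
    rw [heq]
    clear heq hc hw ho
    induction n with
    | zero => exact absurd hn (lt_irrefl 0)
    | succ m ih =>
      have hstep : R (accelRun u κ t a c₀ m) (accelRun u κ t a c₀ (m + 1)) := by
        refine ⟨?_, rfl, rfl⟩
        rw [accelRun_fst u κ t a c₀ m,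
          accelRun_off u κ t a c₀ m _ (fun k hk h => (Nat.ne_of_lt hk).symm (hinj h))]
        exact hφs m (Nat.lt_succ_self m)
      rcases Nat.eq_zero_or_pos m with rfl | hm
      · exact Relation.TransGen.single hstep
      · exact Relation.TransGen.tail
          (ih hm (fun k hk => hφs k (Nat.lt_succ_of_lt hk))) hstep
end

section
/- Full iteration claim for local ground assignments with several arrays, a general iterator, and idle indices. Let α be a type of counter values, u : α → α an iterator, s l : ℕ, κ : Fin s → α → ℤ a selector assignment, d : Fin l → ℤ idle indices, and t : Fin s → α → (Fin s → ℤ) → (Fin s → Fin l → ℤ) → ℤ update terms. Define step : α × (Fin s → ℤ → ℤ) → α × (Fin s → ℤ → ℤ) by step (c, a) = (u c, fun h => Function.update (a h) (κ h c) (t h c (fun h' => a h' (κ h' c)) (fun h' j => a h' (d j)))). Fix c₀ : α such that for every h : Fin s the map (k : ℕ) ↦ κ h (u^[k] c₀) is injective, and let n : ℕ satisfy ∀ h : Fin s, ∀ k < n, ∀ j : Fin l, κ h (u^[k] c₀) ≠ d j. Then for every a : Fin s → ℤ → ℤ: (i) (step^[n] (c₀, a)).1 = u^[n] c₀; (ii)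 ∀ h j, (step^[n] (c₀, a)).2 h (d j) = a h (d j); (iii) ∀ h, ∀ k < n, (step^[n] (c₀, a)).2 h (κ h (u^[k] c₀)) = t h (u^[k] c₀) (fun h' => a h' (κ h' (u^[k] c₀))) (fun h' j => a h' (d j)); (iv) ∀ h, ∀ j : ℤ, (∀ k < n, j ≠ κ h (u^[k] c₀)) → (step^[n] (c₀, a)).2 h j = a h j. -/
theorem local_ground_assignment_iteration_full
    {α : Type*} (u : α → α) (s l : ℕ) (κ : Fin s → α → ℤ) (d : Fin l → ℤ)
    (t : Fin s → α → (Fin s → ℤ) → (Fin s → Fin l → ℤ) → ℤ)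
    (step : α × (Fin s → ℤ → ℤ) → α × (Fin s → ℤ → ℤ))
    (hstep : ∀ (c : α) (a : Fin s → ℤ → ℤ),
      step (c, a) = (u c, fun h =>
        Function.update (a h) (κ h c)
          (t h c (fun h' => a h' (κ h' c)) (fun h' j => a h' (d j)))))
    (c₀ : α)
    (hinj : ∀ h : Fin s, Function.Injective fun k : ℕ => κ h (u^[k] c₀))
    (n : ℕ)
    (hd : ∀ h : Fin s, ∀ k < n, ∀ j : Fin l, κ h (u^[k] c₀) ≠ d j)
    (a : Fin s → ℤ → ℤ) :
    (step^[n] (c₀, a)).1 = u^[n] c₀ ∧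
    (∀ (h : Fin s) (j : Fin l), (step^[n] (c₀, a)).2 h (d j) = a h (d j)) ∧
    (∀ h : Fin s, ∀ k < n, (step^[n] (c₀, a)).2 h (κ h (u^[k] c₀)) =
      t h (u^[k] c₀) (fun h' => a h' (κ h' (u^[k] c₀))) (fun h' j => a h' (d j))) ∧
    (∀ (h : Fin s) (j : ℤ), (∀ k < n, j ≠ κ h (u^[k] c₀)) →
      (step^[n] (c₀, a)).2 h j = a h j) := by
  induction n with
  | zero => exact ⟨rfl, fun h j => rfl, fun h k hk => absurd hk (Nat.not_lt_zero k),
      fun h j _ => rfl⟩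
  | succ n ih =>
    obtain ⟨ih1, ih2, ih3, ih4⟩ := ih (fun h k hk j => hd h k (Nat.lt_succ_of_lt hk) j)
    set b := (step^[n] (c₀, a)).2 with hb
    have hpair : step^[n] (c₀, a) = (u^[n] c₀, b) := by
      rw [hb]; exact Prod.ext ih1 rfl
    have hiter : step^[n+1] (c₀, a) = step (u^[n] c₀, b) := by
      rw [Function.iterate_succ_apply', hpair]
    rw [hiter, hstep]
    refine ⟨by simp [Function.iterate_succ_apply'], ?_, ?_, ?_⟩
    · intro h j
      simp only
      rw [Function.update_of_ne (Ne.symm (hd h n (Nat.lt_succ_self n) j)), ih2 h j]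
    · intro h k hk
      rcases Nat.lt_succ_iff_lt_or_eq.mp hk with hk' | heq
      · simp only
        have hne : κ h (u^[k] c₀) ≠ κ h (u^[n] c₀) := fun he =>
          Nat.lt_irrefl n (by rw [(hinj h) he] at hk'; exact hk')
        rw [Function.update_of_ne hne, ih3 h k hk']
      · rw [heq]
        simp only [Function.update_self]
        congr 1
        · funext h'
          refine ih4 h' _ (fun m hm he => ?_)
          exact Nat.lt_irrefl n (by rw [← (hinj h') he] at hm; exact hm)
        · funext h' j
          exact ih2 h' j
    · intro h j hj
      simp only
      rw [Function.update_of_ne (hj n (Nat.lt_succ_self n))]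
      exact ih4 h j (fun k hk => hj k (Nat.lt_succ_of_lt hk))
end

section
/- Let t : ℤ → ℤ → ℤ and define step : ℤ × (ℤ → ℤ) → ℤ × (ℤ → ℤ) by step (c, a) = (c + 1, Function.update a c (t c (a c))). Then for every n : ℕ and every (c, a), step^[n] (c, a) = (c + n, fun j => if c ≤ j ∧ j < c + n then t j (a j) else a j). -/
theorem simple_local_ground_assignment_iteration
    (t : ℤ → ℤ → ℤ) (n : ℕ) (c : ℤ) (a : ℤ → ℤ) :
    (fun p : ℤ × (ℤ → ℤ) =>
      (p.1 + 1, Function.update p.2 p.1 (t p.1 (p.2 p.1))))^[n] (c, a) =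
    (c + n, fun j => if c ≤ j ∧ j < c + n then t j (a j) else a j) := by
  induction n with
  | zero =>
    simp only [Function.iterate_zero, id_eq, Nat.cast_zero, add_zero]
    refine Prod.ext rfl ?_
    funext j
    simp only
    split_ifs with h
    · omega
    · rfl
  | succ k ih =>
    rw [Function.iterate_succ_apply', ih]
    refine Prod.ext (by push_cast; ring) ?_
    funext j
    simp only
    rw [Function.update_apply]
    split_ifs with h1 h2 h2 h2 <;> first | rfl | omega | (subst h1; simp_all)
end

section
/- Let u : ℤ → ℤ, κ : ℤ → ℤ, t : ℤ → ℤ → ℤ, and define step : ℤ × (ℤ → ℤ) → ℤ × (ℤ → ℤ) by step (c, a) = (u c, Function.update a (κ c) (t c (a (κ c)))). Fix c₀ : ℤ such that the map (k : ℕ) ↦ κ (u^[k] c₀) is injective. Then for every a : ℤ → ℤ and every k : ℕ, the cell about to be written at the k-th step still holds its original value: (step^[k] (c₀, a)).2 (κ (u^[k] c₀)) = a (κ (u^[k] c₀)). -/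
private lemma selector_aux
    (u κ : ℤ → ℤ) (t : ℤ → ℤ → ℤ) (c₀ : ℤ) (a : ℤ → ℤ) (k : ℕ) :
    ((fun p : ℤ × (ℤ → ℤ) =>
        (u p.1, Function.update p.2 (κ p.1) (t p.1 (p.2 (κ p.1)))))^[k] (c₀, a)).1
      = u^[k] c₀ ∧
    ∀ x : ℤ, (∀ j < k, x ≠ κ (u^[j] c₀)) →
      ((fun p : ℤ × (ℤ → ℤ) =>
        (u p.1, Function.update p.2 (κ p.1) (t p.1 (p.2 (κ p.1)))))^[k] (c₀, a)).2 x
      = a x := by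
  induction k with
  | zero => exact ⟨rfl, fun x _ => rfl⟩
  | succ k ih =>
    rw [Function.iterate_succ_apply', Function.iterate_succ_apply']
    refine ⟨by rw [ih.1], fun x hx => ?_⟩
    simp only
    rw [Function.update_of_ne (by rw [ih.1]; exact hx k (Nat.lt_succ_self k))]
    exact ih.2 x fun j hj => hx j (Nat.lt_succ_of_lt hj)

theorem selector_freshness
    (u κ : ℤ → ℤ) (t : ℤ → ℤ → ℤ) (c₀ : ℤ)
    (hinj : Function.Injective fun k : ℕ => κ (u^[k] c₀))
    (a : ℤ → ℤ) (k : ℕ) :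
    ((fun p : ℤ × (ℤ → ℤ) =>
        (u p.1, Function.update p.2 (κ p.1) (t p.1 (p.2 (κ p.1)))))^[k] (c₀, a)).2
      (κ (u^[k] c₀)) = a (κ (u^[k] c₀)) := by
  exact (selector_aux u κ t c₀ a k).2 _ fun j hj h => (Nat.lt_irrefl k) (hinj h ▸ hj)
end

section
/- Let t : ℤ → ℤ → ℤ and define step : ℤ × (ℤ → ℤ) → ℤ × (ℤ → ℤ) by step (c, a) = (c - 1, Function.update a c (t c (a c))). Then for every n : ℕ and every (c, a), step^[n] (c, a) = (c - n, fun j => if c - n < j ∧ j ≤ c then t j (a j) else a j). -/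
theorem simple_plus_decrement_iteration
    (t : ℤ → ℤ → ℤ) (n : ℕ) (c : ℤ) (a : ℤ → ℤ) :
    (fun p : ℤ × (ℤ → ℤ) =>
      (p.1 - 1, Function.update p.2 p.1 (t p.1 (p.2 p.1))))^[n] (c, a) =
    (c - n, fun j => if c - n < j ∧ j ≤ c then t j (a j) else a j) := by
  induction n with
  | zero =>
    simp only [Function.iterate_zero, id, Nat.cast_zero, sub_zero]
    refine Prod.ext rfl ?_
    funext j
    show a j = if c < j ∧ j ≤ c then t j (a j) else a j
    rw [if_neg (by omega)]
  | succ m ih =>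
    rw [Function.iterate_succ_apply', ih]
    refine Prod.ext (by push_cast; ring) ?_
    funext j
    simp only [Function.update_apply]
    push_cast
    rw [if_neg (show ¬(c - (m : ℤ) < c - m ∧ c - m ≤ c) by omega)]
    split_ifs with h1 h2 h2
    · subst h1; rfl
    · exfalso; omega
    · rfl
    · exfalso; omega
    · exfalso; omega
    · rfl
end

section
/- Let t : ℤ → ℤ → ℤ → ℤ, fix an idle index d : ℤ, and define step : ℤ × (ℤ → ℤ) → ℤ × (ℤ → ℤ) by step (c, a) = (c + 1, Function.update a c (t c (a c) (a d))). Let n : ℕ and c : ℤ satisfy ∀ k < n, c + (k : ℤ) ≠ d. Then for every a : ℤ → ℤ, step^[n] (c, a) = (c + n, fun j => if c ≤ j ∧ j < c + n then t j (a j) (a d) else a j); in particular the idle cell is preserved: (step^[n] (c, a)).2 d = a d. -/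
theorem simple_plus_idle_aux
    (t : ℤ → ℤ → ℤ → ℤ) (d : ℤ) (n : ℕ) :
    ∀ (c : ℤ), (∀ k < n, c + (k : ℤ) ≠ d) → ∀ (a : ℤ → ℤ),
    (fun p : ℤ × (ℤ → ℤ) =>
      (p.1 + 1, Function.update p.2 p.1 (t p.1 (p.2 p.1) (p.2 d))))^[n] (c, a) =
      (c + n, fun j => if c ≤ j ∧ j < c + n then t j (a j) (a d) else a j) := by
  induction n with
  | zero =>
    intro c _ a
    simp only [Function.iterate_zero, id_eq, Nat.cast_zero, add_zero]
    refine Prod.ext rfl ?_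
    funext j
    simp only
    split
    · omega
    · rfl
  | succ m ih =>
    intro c hd a
    have hc : c ≠ d := by simpa using hd 0 (Nat.succ_pos m)
    rw [Function.iterate_succ_apply]
    set a' := Function.update a c (t c (a c) (a d)) with ha'
    have h1 : (∀ k < m, (c + 1) + (k : ℤ) ≠ d) := by
      intro k hk
      have := hd (k + 1) (by omega)
      push_cast at this ⊢
      omega
    have := ih (c + 1) h1 a'
    rw [this]
    refine Prod.ext (by push_cast; ring) ?_
    funext j
    simp only
    have had : a' d = a d := Function.update_of_ne (Ne.symm hc) _ _
    by_cases hj : c ≤ j ∧ j < c + (m + 1 : ℕ)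
    · rcases eq_or_ne j c with hjc | hjc
      · have h3 : ¬ (c + 1 ≤ j ∧ j < c + 1 + m) := by omega
        rw [if_pos hj, if_neg h3, ha', hjc, Function.update_self]
      · have : c + 1 ≤ j ∧ j < c + 1 + m := by push_cast at hj; omega
        rw [if_pos hj, if_pos this, had, ha', Function.update_of_ne hjc]
    · have h2 : ¬ (c + 1 ≤ j ∧ j < c + 1 + m) := by push_cast at hj; omega
      have hjc : j ≠ c := by push_cast at hj; omega
      rw [if_neg hj, if_neg h2, ha', Function.update_of_ne hjc]

theorem simple_plus_idle_iteration
    (t : ℤ → ℤ → ℤ → ℤ) (d : ℤ) (n : ℕ) (c : ℤ)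
    (hd : ∀ k < n, c + (k : ℤ) ≠ d) (a : ℤ → ℤ) :
    (fun p : ℤ × (ℤ → ℤ) =>
      (p.1 + 1, Function.update p.2 p.1 (t p.1 (p.2 p.1) (p.2 d))))^[n] (c, a) =
      (c + n, fun j => if c ≤ j ∧ j < c + n then t j (a j) (a d) else a j) ∧
    ((fun p : ℤ × (ℤ → ℤ) =>
      (p.1 + 1, Function.update p.2 p.1 (t p.1 (p.2 p.1) (p.2 d))))^[n] (c, a)).2 d
      = a d := by
  have h := simple_plus_idle_aux t d n c hd a
  refine ⟨h, ?_⟩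
  rw [h]
  simp only
  have : ¬ (c ≤ d ∧ d < c + n) := by
    rintro ⟨h1, h2⟩
    exact hd (d - c).toNat (by omega) (by omega)
  rw [if_neg this]
end

section
/- Let α be a type, R a binary relation on α, and I E C : Set α. Assume E ⊆ C, that C is closed under preimage along R (for every s, if there exists s' with R s s' and s' ∈ C, then s ∈ C), and that I ∩ C = ∅. Then no state in E is reachable from a state in I: for all s ∈ I and all s', if Relation.ReflTransGen R s s' then s' ∉ E. -/
theorem backward_search_soundness
    {α : Type*} (R : α → α → Prop) (I E C : Set α)
    (hEC : E ⊆ C)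
    (hpre : ∀ s, (∃ s', R s s' ∧ s' ∈ C) → s ∈ C)
    (hIC : I ∩ C = ∅) :
    ∀ s ∈ I, ∀ s', Relation.ReflTransGen R s s' → s' ∉ E := by
  intro s hs s' hss' hE
  have hC : s ∈ C := by
    clear hs hIC
    induction hss' using Relation.ReflTransGen.head_induction_on with
    | refl => exact hEC hE
    | head h _ ih => exact hpre _ ⟨_, h, ih⟩
  exact Set.eq_empty_iff_forall_notMem.mp hIC s ⟨hs, hC⟩
end

section
/- Fix I O : ℤ → ℤ and N : ℕ, and define step : ℤ × (ℤ → ℤ) → ℤ × (ℤ → ℤ) by step (c, A) = (c + 1, Function.update A c (I ((N : ℤ) - c))). Let O' := (step^[N + 1] (0, O)).2 be the output array after running the loop N + 1 times from counter 0. Then the postcondition of the Reverse program holds: for all x y : ℤ with 0 ≤ x, 0 ≤ y, and x + y = N, one has I x = O' y. -/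
theorem reverse_aux (I O : ℤ → ℤ) (N : ℕ) :
    ∀ k : ℕ, ((fun p : ℤ × (ℤ → ℤ) =>
        (p.1 + 1, Function.update p.2 p.1 (I ((N : ℤ) - p.1))))^[k] (0, O)) =
      ((k : ℤ), fun y => if 0 ≤ y ∧ y < (k : ℤ) then I ((N : ℤ) - y) else O y) := by
  intro k
  induction k with
  | zero =>
    simp only [Function.iterate_zero, id, Nat.cast_zero]
    refine Prod.ext rfl ?_
    funext y
    simp only
    rw [if_neg (by omega)]
  | succ k ih =>
    rw [Function.iterate_succ_apply', ih]
    refine Prod.ext (by push_cast; ring) ?_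
    funext y
    simp only [Function.update_apply]
    push_cast
    by_cases h : y = (k : ℤ)
    · subst h
      rw [if_pos rfl, if_pos ⟨Int.natCast_nonneg k, by omega⟩]
    · rw [if_neg h]
      by_cases h2 : 0 ≤ y ∧ y < (k : ℤ)
      · rw [if_pos h2, if_pos ⟨h2.1, by omega⟩]
      · rw [if_neg h2, if_neg (by omega)]

theorem reverse_program_postcondition
    (I O : ℤ → ℤ) (N : ℕ) :
    ∀ x y : ℤ, 0 ≤ x → 0 ≤ y → x + y = N →
      I x = ((fun p : ℤ × (ℤ → ℤ) =>
        (p.1 + 1, Function.update p.2 p.1 (I ((N : ℤ) - p.1))))^[N + 1] (0, O)).2 y := by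
  intro x y hx hy hxy
  rw [reverse_aux I O N (N + 1)]
  simp only
  rw [if_pos ⟨hy, by push_cast; omega⟩]
  congr 1
  omega
end

section
/- Fix a : ℤ → ℤ and i : ℤ, and define the relation R on ℤ (the inner-loop transition τ₆ of the allDiff program, which leaves the array unchanged) by R j j' iff (i ≠ j ∧ 0 ≤ j ∧ a i ≠ a j) ∧ j' = j - 1. Then for all j j' : ℤ, Relation.TransGen R j j' holds if and only if there exists k : ℕ with k > 0 such that j' = j - k and for every l : ℤ with j' < l and l ≤ j: i ≠ l, 0 ≤ l, and a i ≠ a l. -/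
theorem allDiff_inner_loop_acceleration
    (a : ℤ → ℤ) (i : ℤ) (j j' : ℤ) :
    Relation.TransGen
      (fun j j' : ℤ => (i ≠ j ∧ 0 ≤ j ∧ a i ≠ a j) ∧ j' = j - 1) j j' ↔
    ∃ k : ℕ, k > 0 ∧ j' = j - k ∧
      ∀ l : ℤ, j' < l → l ≤ j → i ≠ l ∧ 0 ≤ l ∧ a i ≠ a l := by
  constructor
  · intro h
    induction h with
    | single h =>
      refine ⟨1, by norm_num, by push_cast; omega, ?_⟩
      intro l h1 h2
      have : l = j := by omega
      subst this
      exact h.1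
    | @tail b c h1 h2 ih =>
      obtain ⟨k, hk, hb, hall⟩ := ih
      refine ⟨k + 1, by omega, by push_cast; omega, ?_⟩
      intro l hl1 hl2
      rcases eq_or_lt_of_le (show b ≤ l by omega) with h | h
      · subst h; exact h2.1
      · exact hall l h hl2
  · rintro ⟨k, hk, hj', hall⟩
    induction k generalizing j' with
    | zero => omega
    | succ m ih =>
      rcases Nat.eq_zero_or_pos m with hm | hm
      · subst hm
        apply Relation.TransGen.single
        refine ⟨hall j (by push_cast at hj'; omega) le_rfl, by push_cast at hj' ⊢; omega⟩
      · have hmlt : (m : ℤ) < (m : ℤ) + 1 := by omega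
        have hstep : Relation.TransGen
            (fun j j' : ℤ => (i ≠ j ∧ 0 ≤ j ∧ a i ≠ a j) ∧ j' = j - 1) j (j - m) := by
          apply ih (j - m) hm rfl
          intro l hl1 hl2
          exact hall l (by push_cast at hj'; omega) hl2
        apply hstep.tail
        refine ⟨hall (j - m) (by push_cast at hj'; omega) (by omega),
          by push_cast at hj' ⊢; omega⟩
end
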